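/- arXiv:1407.2680 — 4 statements merged into one kernel-verified Lean document; each statement's English description precedes it below -/
import Mathlib

section
/- If G₁ and G₂ are two graphs with the same number n of vertices, then E(G₁) - E(G₂) = (1/π) ∫_{-∞}^{∞} log |φ(G₁, ix)/φ(G₂, ix)| dx, where E(G) is the sum of the absolute values of the adjacency eigenvalues of G and φ the characteristic polynomial (with i the imaginary unit). -/
/-!
For a real symmetric matrix with eigenvalues `λ_j`, `φ(ix) = ∏ (ix - λ_j)`, so for `x ≠ 0`
`log |φ(ix)| = n log |x| + ½ ∑ log (1 + λ_j² / x²)`. When both graphs have `n` vertices the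
`n log |x|` terms cancel, and everything reduces to `∫ log (1 + a² / x²) dx = 2π|a|`. On `(0, ∞)`
this integral is computed from the primitive `x log (1 + a² / x²) + 2a arctan (x / a)`, which
vanishes at `0` and tends to `πa` at `+∞`; the integrand is even.
-/

open Polynomial MeasureTheory Real Set Filter Topology

noncomputable def logOneAddSqPrimitive (a x : ℝ) : ℝ :=
  x * log (1 + (a / x) ^ 2) + 2 * a * arctan (x / a)

lemma mul_log_one_add_sq_div (a x : ℝ) :
    x * log (1 + (a / x) ^ 2) = x * log (x ^ 2 + a ^ 2) - 2 * (x * log x) := by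
  rcases eq_or_ne x 0 with rfl | hx
  · simp
  have hx2 : 0 < x ^ 2 := by positivity
  rw [show 1 + (a / x) ^ 2 = (x ^ 2 + a ^ 2) / x ^ 2 by field_simp,
    log_div (by positivity) hx2.ne', log_pow]
  push_cast
  ring

lemma hasDerivAt_logOneAddSqPrimitive {a x : ℝ} (ha : a ≠ 0) (hx : x ≠ 0) :
    HasDerivAt (logOneAddSqPrimitive a) (log (1 + (a / x) ^ 2)) x := by
  have hq : HasDerivAt (fun y => 1 + (a / y) ^ 2) (2 * (a / x) * (a * -(x ^ 2)⁻¹)) x := by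
    simpa [div_eq_mul_inv] using (((hasDerivAt_inv hx).const_mul a).pow 2).const_add 1
  have hlog := (hasDerivAt_id x).mul (hq.log (by positivity))
  have harctan :=
    ((hasDerivAt_arctan (x / a)).comp x ((hasDerivAt_id x).div_const a)).const_mul (2 * a)
  refine (hlog.add harctan).congr_deriv ?_
  simp only [id]
  field_simp
  ring

lemma continuous_logOneAddSqPrimitive {a : ℝ} (ha : a ≠ 0) :
    Continuous (logOneAddSqPrimitive a) := by
  unfold logOneAddSqPrimitive
  -- removes the singularity at `x = 0`: `x * log x` is continuous on all of `ℝ`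
  simp_rw [mul_log_one_add_sq_div]
  have : ∀ x : ℝ, x ^ 2 + a ^ 2 ≠ 0 := fun x => by positivity
  fun_prop (disch := assumption)

lemma tendsto_mul_log_one_add_sq_div_atTop (a : ℝ) :
    Tendsto (fun x => x * log (1 + (a / x) ^ 2)) atTop (𝓝 0) := by
  refine tendsto_of_tendsto_of_tendsto_of_le_of_le' tendsto_const_nhds
    (tendsto_const_nhds.div_atTop tendsto_id : Tendsto (fun x : ℝ => a ^ 2 / x) _ _) ?_ ?_
  · filter_upwards [eventually_ge_atTop 0] with x hx
    exact mul_nonneg hx (log_nonneg (by simp; positivity))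
  · filter_upwards [eventually_gt_atTop 0] with x hx
    calc x * log (1 + (a / x) ^ 2) ≤ x * (a / x) ^ 2 := by
          gcongr
          linarith [log_le_sub_one_of_pos (show 0 < 1 + (a / x) ^ 2 by positivity)]
      _ = a ^ 2 / x := by field_simp

lemma tendsto_logOneAddSqPrimitive_atTop {a : ℝ} (ha : 0 < a) :
    Tendsto (logOneAddSqPrimitive a) atTop (𝓝 (π * a)) := by
  have harctan : Tendsto (fun x => arctan (x / a)) atTop (𝓝 (π / 2)) :=
    (tendsto_nhds_of_tendsto_nhdsWithin tendsto_arctan_atTop).comp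
      (tendsto_id.atTop_div_const ha)
  convert (tendsto_mul_log_one_add_sq_div_atTop a).add (harctan.const_mul (2 * a)) using 2
  · rfl
  · ring

lemma integral_Ioi_log_one_add_sq_div {a : ℝ} (ha : 0 < a) :
    ∫ x in Ioi (0 : ℝ), log (1 + (a / x) ^ 2) = π * a := by
  rw [integral_Ioi_of_hasDerivAt_of_nonneg
    (continuous_logOneAddSqPrimitive ha.ne').continuousWithinAt
    (fun x hx => hasDerivAt_logOneAddSqPrimitive ha.ne' (ne_of_gt hx))
    (fun x _ => log_nonneg (by simp; positivity)) (tendsto_logOneAddSqPrimitive_atTop ha)]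
  simp [logOneAddSqPrimitive]

theorem integral_log_one_add_sq_div (a : ℝ) :
    ∫ x, log (1 + (a / x) ^ 2) = 2 * π * |a| := by
  rcases eq_or_ne a 0 with rfl | ha
  · simp
  have heven : ∀ x : ℝ, (a / x) ^ 2 = (|a| / |x|) ^ 2 := fun x => by
    rw [div_pow, div_pow, sq_abs, sq_abs]
  simp_rw [heven]
  rw [integral_comp_abs (f := fun x => log (1 + (|a| / x) ^ 2)),
    integral_Ioi_log_one_add_sq_div (abs_pos.mpr ha)]
  ring

theorem integrable_log_one_add_sq_div (a : ℝ) :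
    Integrable fun x : ℝ => log (1 + (a / x) ^ 2) := by
  rcases eq_or_ne a 0 with rfl | ha
  · simp
  refine .of_integral_ne_zero ?_
  rw [integral_log_one_add_sq_div]
  positivity

lemma I_mul_sub_ne_zero (a : ℝ) {x : ℝ} (hx : x ≠ 0) : Complex.I * x - a ≠ 0 := by
  rw [sub_ne_zero]
  intro h
  simpa [hx] using congrArg Complex.im h

lemma log_norm_I_mul_sub (a : ℝ) {x : ℝ} (hx : x ≠ 0) :
    log ‖Complex.I * x - a‖ = log |x| + log (1 + (a / x) ^ 2) / 2 := by
  have hsq : x ^ 2 + a ^ 2 = |x| ^ 2 * (1 + (a / x) ^ 2) := by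
    rw [sq_abs]; field_simp
  rw [Complex.norm_eq_sqrt_sq_add_sq]
  simp only [Complex.sub_re, Complex.mul_re, Complex.I_re, Complex.I_im, Complex.ofReal_re,
    Complex.ofReal_im, Complex.sub_im, Complex.mul_im]
  rw [show (0 * x - 1 * 0 - a) ^ 2 + (0 * 0 + 1 * x - 0) ^ 2 = x ^ 2 + a ^ 2 by ring, hsq,
    log_sqrt (by positivity), log_mul (by positivity) (by positivity), log_pow]
  push_cast
  ring

lemma norm_prod_I_mul_sub_ne_zero {ι : Type*} [Fintype ι] (a : ι → ℝ) {x : ℝ} (hx : x ≠ 0) :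
    ‖∏ i, (Complex.I * x - a i)‖ ≠ 0 :=
  norm_ne_zero_iff.mpr (Finset.prod_ne_zero_iff.mpr fun i _ => I_mul_sub_ne_zero (a i) hx)

lemma log_norm_prod_I_mul_sub {ι : Type*} [Fintype ι] (a : ι → ℝ) {x : ℝ} (hx : x ≠ 0) :
    log ‖∏ i, (Complex.I * x - a i)‖ =
      Fintype.card ι * log |x| + (∑ i, log (1 + (a i / x) ^ 2)) / 2 := by
  rw [norm_prod, log_prod fun i _ => norm_ne_zero_iff.mpr (I_mul_sub_ne_zero (a i) hx)]
  simp_rw [log_norm_I_mul_sub _ hx]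
  rw [Finset.sum_add_distrib, Finset.sum_const, Finset.sum_div, nsmul_eq_mul, Finset.card_univ]

lemma integrable_sum_log_one_add_sq_div {ι : Type*} [Fintype ι] (a : ι → ℝ) :
    Integrable fun x : ℝ => ∑ i, log (1 + (a i / x) ^ 2) :=
  integrable_finsetSum _ fun i _ => integrable_log_one_add_sq_div (a i)

lemma integral_sum_log_one_add_sq_div {ι : Type*} [Fintype ι] (a : ι → ℝ) :
    ∫ x : ℝ, ∑ i, log (1 + (a i / x) ^ 2) = 2 * π * ∑ i, |a i| := by
  rw [integral_finsetSum _ fun i _ => integrable_log_one_add_sq_div (a i), Finset.mul_sum]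
  simp_rw [integral_log_one_add_sq_div]

theorem sum_abs_sub_sum_abs_eq_integral {ι κ : Type*} [Fintype ι] [Fintype κ]
    (hcard : Fintype.card ι = Fintype.card κ) (a : ι → ℝ) (b : κ → ℝ) :
    ∑ i, |a i| - ∑ j, |b j| =
      1 / π * ∫ x : ℝ, log ‖(∏ i, (Complex.I * x - a i)) / ∏ j, (Complex.I * x - b j)‖ := by
  have hae : (fun x : ℝ => log ‖(∏ i, (Complex.I * x - a i)) / ∏ j, (Complex.I * x - b j)‖)
      =ᵐ[volume] fun x => (∑ i, log (1 + (a i / x) ^ 2) - ∑ j, log (1 + (b j / x) ^ 2)) / 2 := by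
    filter_upwards [Measure.ae_ne volume 0] with x hx
    rw [norm_div, log_div (norm_prod_I_mul_sub_ne_zero a hx) (norm_prod_I_mul_sub_ne_zero b hx),
      log_norm_prod_I_mul_sub a hx, log_norm_prod_I_mul_sub b hx, hcard]
    ring
  rw [integral_congr_ae hae, integral_div, integral_sub (integrable_sum_log_one_add_sq_div a)
    (integrable_sum_log_one_add_sq_div b),
    integral_sum_log_one_add_sq_div, integral_sum_log_one_add_sq_div]
  field_simp

namespace Matrix.IsHermitian

variable {m n : Type*} [Fintype m] [Fintype n] [DecidableEq m] [DecidableEq n]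

lemma eval_map_charpoly {A : Matrix n n ℝ} (hA : A.IsHermitian) (z : ℂ) :
    (A.charpoly.map (algebraMap ℝ ℂ)).eval z = ∏ i, (z - hA.eigenvalues i) := by
  simp [hA.charpoly_eq, Polynomial.map_prod, eval_prod]

theorem sum_abs_eigenvalues_sub_eq_integral {A : Matrix m m ℝ} {B : Matrix n n ℝ}
    (hA : A.IsHermitian) (hB : B.IsHermitian) (hcard : Fintype.card m = Fintype.card n) :
    ∑ i, |hA.eigenvalues i| - ∑ j, |hB.eigenvalues j| =
      1 / π * ∫ x : ℝ, log ‖(A.charpoly.map (algebraMap ℝ ℂ)).eval (Complex.I * x) /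
        (B.charpoly.map (algebraMap ℝ ℂ)).eval (Complex.I * x)‖ := by
  simp_rw [hA.eval_map_charpoly, hB.eval_map_charpoly]
  exact sum_abs_sub_sum_abs_eq_integral hcard _ _

end Matrix.IsHermitian

/-- Coulson-type integral formula for the difference of graph energies: if
`G₁` and `G₂` have the same number of vertices, then
`E(G₁) - E(G₂) = (1/π) ∫ log |φ(G₁, ix)/φ(G₂, ix)| dx`, where the energy
`E(G)` is the sum of the absolute values of the adjacency eigenvalues and `φ`
is the characteristic polynomial of the adjacency matrix. -/
theorem energy_difference_integral
    {V₁ V₂ : Type*} [Fintype V₁] [Fintype V₂] [DecidableEq V₁] [DecidableEq V₂]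
    (G₁ : SimpleGraph V₁) (G₂ : SimpleGraph V₂)
    [DecidableRel G₁.Adj] [DecidableRel G₂.Adj]
    (hcard : Fintype.card V₁ = Fintype.card V₂)
    (h₁ : (G₁.adjMatrix ℝ).IsHermitian) (h₂ : (G₂.adjMatrix ℝ).IsHermitian) :
    (∑ i, |h₁.eigenvalues i|) - (∑ i, |h₂.eigenvalues i|) =
      (1 / Real.pi) * ∫ x : ℝ,
        Real.log (‖
          (((G₁.adjMatrix ℝ).charpoly.map (algebraMap ℝ ℂ)).eval (Complex.I * x) /
            ((G₂.adjMatrix ℝ).charpoly.map (algebraMap ℝ ℂ)).eval (Complex.I * x))‖) :=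
  h₁.sum_abs_eigenvalues_sub_eq_integral h₂ hcard
end

section
/- Define the polynomials f₆(x) = x⁶ + 6x⁴ + 6x², f₈(x) = x⁸ + 8x⁶ + 16x⁴ + 6x², g₆(x) = x⁶ + 6x⁴ + 5x² + 1, g₈(x) = x⁸ + 8x⁶ + 15x⁴ + 8x² + 1, and with Z₁, Z₂ as the roots of t² + (x²+1)t - x² = 0 set A₁ = (f₈ + Z₂f₆)/(Z₁⁴ + Z₁²x²), A₂ = (f₈ + Z₁f₆)/(Z₂⁴ + Z₂²x²), B₁ = (g₈ + Z₂g₆)/(Z₁⁴ + Z₁²x²), B₂ = (g₈ + Z₁g₆)/(Z₂⁴ + Z₂²x²). Then for every nonzero real x, A₁B₂ - A₂B₁ = (-3x⁸ - 15x⁶ - 8x⁴)·√(x⁴+6x²+1) / (x⁶·(x⁴+6x²+1)) < 0. -/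
/-!
Since `Z₁ Z₂ = -x²` and `Z₁ + Z₂ = -x² - 1` (Vieta), the product of the two denominators is
`(Z₁ Z₂)² ((Z₁ Z₂)² + x² (Z₁² + Z₂²) + x⁴) = x⁶ (x⁴ + 6x² + 1)`, while the cross terms of the
numerators cancel up to `(Z₁ - Z₂)(f₈ g₆ - f₆ g₈) = √(x⁴ + 6x² + 1) · (-3x⁸ - 15x⁶ - 8x⁴)`.
-/

theorem div_mul_div_sub_div_mul_div {K : Type*} [Field K] (a b c d p q e₁ e₂ : K) :
    (a + q * b) / e₁ * ((c + p * d) / e₂) - (a + p * b) / e₂ * ((c + q * d) / e₁) =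
      (p - q) * (a * d - b * c) / (e₁ * e₂) := by
  rw [div_mul_div_comm, div_mul_div_comm, mul_comm e₂ e₁, ← sub_div]
  ring

theorem pow_four_add_sq_mul_mul_eq_of_vieta {R : Type*} [CommRing R] {x z₁ z₂ : R}
    (hmul : z₁ * z₂ = -x ^ 2) (hadd : z₁ + z₂ = -x ^ 2 - 1) :
    (z₁ ^ 4 + z₁ ^ 2 * x ^ 2) * (z₂ ^ 4 + z₂ ^ 2 * x ^ 2) = x ^ 6 * (x ^ 4 + 6 * x ^ 2 + 1) := by
  have h : (z₁ ^ 4 + z₁ ^ 2 * x ^ 2) * (z₂ ^ 4 + z₂ ^ 2 * x ^ 2) =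
      (z₁ * z₂) ^ 2 * ((z₁ * z₂) ^ 2 + x ^ 2 * ((z₁ + z₂) ^ 2 - 2 * (z₁ * z₂)) + x ^ 4) := by
    ring
  rw [h, hmul, hadd]
  ring

theorem A1B2_sub_A2B1_eq_and_neg
    (x : ℝ) (hx : x ≠ 0)
    (Z₁ Z₂ f₆ f₈ g₆ g₈ A₁ A₂ B₁ B₂ : ℝ)
    (hZ₁ : Z₁ = (-x ^ 2 - 1 + Real.sqrt (x ^ 4 + 6 * x ^ 2 + 1)) / 2)
    (hZ₂ : Z₂ = (-x ^ 2 - 1 - Real.sqrt (x ^ 4 + 6 * x ^ 2 + 1)) / 2)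
    (hf₆ : f₆ = x ^ 6 + 6 * x ^ 4 + 6 * x ^ 2)
    (hf₈ : f₈ = x ^ 8 + 8 * x ^ 6 + 16 * x ^ 4 + 6 * x ^ 2)
    (hg₆ : g₆ = x ^ 6 + 6 * x ^ 4 + 5 * x ^ 2 + 1)
    (hg₈ : g₈ = x ^ 8 + 8 * x ^ 6 + 15 * x ^ 4 + 8 * x ^ 2 + 1)
    (hA₁ : A₁ = (f₈ + Z₂ * f₆) / (Z₁ ^ 4 + Z₁ ^ 2 * x ^ 2))
    (hA₂ : A₂ = (f₈ + Z₁ * f₆) / (Z₂ ^ 4 + Z₂ ^ 2 * x ^ 2))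
    (hB₁ : B₁ = (g₈ + Z₂ * g₆) / (Z₁ ^ 4 + Z₁ ^ 2 * x ^ 2))
    (hB₂ : B₂ = (g₈ + Z₁ * g₆) / (Z₂ ^ 4 + Z₂ ^ 2 * x ^ 2)) :
    A₁ * B₂ - A₂ * B₁ =
      (-3 * x ^ 8 - 15 * x ^ 6 - 8 * x ^ 4) * Real.sqrt (x ^ 4 + 6 * x ^ 2 + 1) /
        (x ^ 6 * (x ^ 4 + 6 * x ^ 2 + 1)) ∧
    A₁ * B₂ - A₂ * B₁ < 0 := by
  have hD : 0 < x ^ 4 + 6 * x ^ 2 + 1 := by positivity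
  have hmul : Z₁ * Z₂ = -x ^ 2 := by
    rw [hZ₁, hZ₂]
    linear_combination (-1 / 4 : ℝ) * Real.sq_sqrt hD.le
  have hadd : Z₁ + Z₂ = -x ^ 2 - 1 := by rw [hZ₁, hZ₂]; ring
  have hsub : Z₁ - Z₂ = Real.sqrt (x ^ 4 + 6 * x ^ 2 + 1) := by rw [hZ₁, hZ₂]; ring
  have hdet : A₁ * B₂ - A₂ * B₁ =
      (-3 * x ^ 8 - 15 * x ^ 6 - 8 * x ^ 4) * Real.sqrt (x ^ 4 + 6 * x ^ 2 + 1) /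
        (x ^ 6 * (x ^ 4 + 6 * x ^ 2 + 1)) := by
    rw [hA₁, hA₂, hB₁, hB₂, div_mul_div_sub_div_mul_div, hsub,
      pow_four_add_sq_mul_mul_eq_of_vieta hmul hadd, hf₆, hf₈, hg₆, hg₈]
    ring
  refine ⟨hdet, hdet ▸ div_neg_of_neg_of_pos (mul_neg_of_neg_of_pos ?_ (Real.sqrt_pos.2 hD))
    (by positivity)⟩
  have : 0 < 3 * x ^ 8 + 15 * x ^ 6 + 8 * x ^ 4 := by positivity
  linarith
end

section
/- With the same definitions, for every nonzero real x, A₁B₂ + A₂B₁ = (4x⁴ + 17x⁶ + 20x⁸ + 3x¹⁰) / (x⁶·(x⁴+6x²+1)) > 0. -/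
/-!
Z₁ and Z₂ are the two roots of Z² + (x² + 1) Z - x², so Z₁ + Z₂ = -(x² + 1) and Z₁ Z₂ = -x².
Both the numerator and the denominator of A₁B₂ + A₂B₁, once put over the common denominator,
are symmetric in Z₁, Z₂; by Vieta they become polynomials in x, the denominator being
x⁶ (x⁴ + 6x² + 1). Positivity for x ≠ 0 is then read off the closed form.
-/

lemma add_eq_and_mul_eq_of_eq_half_add_sub_sqrt {m c d Z₁ Z₂ : ℝ}
    (hd : m ^ 2 - 4 * c = d) (hd₀ : 0 ≤ d)
    (h₁ : Z₁ = (m + √d) / 2) (h₂ : Z₂ = (m - √d) / 2) :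
    Z₁ + Z₂ = m ∧ Z₁ * Z₂ = c := by
  have hsq : √d ^ 2 = d := Real.sq_sqrt hd₀
  subst h₁ h₂
  constructor
  · ring
  · linear_combination (-1 / 4 : ℝ) * hsq + (1 / 4 : ℝ) * hd

section CommRing

variable {R : Type*} [CommRing R]

lemma add_mul_add_add_add_mul_add (Z₁ Z₂ a b c d : R) :
    (a + Z₂ * b) * (c + Z₁ * d) + (a + Z₁ * b) * (c + Z₂ * d) =
      2 * a * c + (Z₁ + Z₂) * (a * d + b * c) + 2 * (Z₁ * Z₂) * (b * d) := by
  ring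

lemma pow_four_add_sq_mul_mul_pow_four_add_sq_mul (Z₁ Z₂ t : R) :
    (Z₁ ^ 4 + Z₁ ^ 2 * t) * (Z₂ ^ 4 + Z₂ ^ 2 * t) =
      (Z₁ * Z₂) ^ 2 * ((Z₁ * Z₂) ^ 2 + t * ((Z₁ + Z₂) ^ 2 - 2 * (Z₁ * Z₂)) + t ^ 2) := by
  ring

end CommRing

lemma div_mul_div_add_div_mul_div_swap {K : Type*} [Field K] (a b c d e f : K) :
    a / b * (c / d) + e / d * (f / b) = (a * c + e * f) / (b * d) := by
  rw [div_mul_div_comm, div_mul_div_comm, mul_comm d b, ← add_div]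

theorem A1B2_add_A2B1_eq_and_pos
    (x : ℝ) (hx : x ≠ 0)
    (Z₁ Z₂ f₆ f₈ g₆ g₈ A₁ A₂ B₁ B₂ : ℝ)
    (hZ₁ : Z₁ = (-x ^ 2 - 1 + Real.sqrt (x ^ 4 + 6 * x ^ 2 + 1)) / 2)
    (hZ₂ : Z₂ = (-x ^ 2 - 1 - Real.sqrt (x ^ 4 + 6 * x ^ 2 + 1)) / 2)
    (hf₆ : f₆ = x ^ 6 + 6 * x ^ 4 + 6 * x ^ 2)
    (hf₈ : f₈ = x ^ 8 + 8 * x ^ 6 + 16 * x ^ 4 + 6 * x ^ 2)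
    (hg₆ : g₆ = x ^ 6 + 6 * x ^ 4 + 5 * x ^ 2 + 1)
    (hg₈ : g₈ = x ^ 8 + 8 * x ^ 6 + 15 * x ^ 4 + 8 * x ^ 2 + 1)
    (hA₁ : A₁ = (f₈ + Z₂ * f₆) / (Z₁ ^ 4 + Z₁ ^ 2 * x ^ 2))
    (hA₂ : A₂ = (f₈ + Z₁ * f₆) / (Z₂ ^ 4 + Z₂ ^ 2 * x ^ 2))
    (hB₁ : B₁ = (g₈ + Z₂ * g₆) / (Z₁ ^ 4 + Z₁ ^ 2 * x ^ 2))
    (hB₂ : B₂ = (g₈ + Z₁ * g₆) / (Z₂ ^ 4 + Z₂ ^ 2 * x ^ 2)) :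
    A₁ * B₂ + A₂ * B₁ =
      (4 * x ^ 4 + 17 * x ^ 6 + 20 * x ^ 8 + 3 * x ^ 10) /
        (x ^ 6 * (x ^ 4 + 6 * x ^ 2 + 1)) ∧
    0 < A₁ * B₂ + A₂ * B₁ := by
  obtain ⟨hsum, hprod⟩ : Z₁ + Z₂ = -x ^ 2 - 1 ∧ Z₁ * Z₂ = -x ^ 2 :=
    add_eq_and_mul_eq_of_eq_half_add_sub_sqrt (by ring) (by positivity) hZ₁ hZ₂
  have hnum : (f₈ + Z₂ * f₆) * (g₈ + Z₁ * g₆) + (f₈ + Z₁ * f₆) * (g₈ + Z₂ * g₆) =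
      4 * x ^ 4 + 17 * x ^ 6 + 20 * x ^ 8 + 3 * x ^ 10 := by
    rw [add_mul_add_add_add_mul_add, hsum, hprod, hf₆, hf₈, hg₆, hg₈]
    ring
  have hden : (Z₁ ^ 4 + Z₁ ^ 2 * x ^ 2) * (Z₂ ^ 4 + Z₂ ^ 2 * x ^ 2) =
      x ^ 6 * (x ^ 4 + 6 * x ^ 2 + 1) := by
    rw [pow_four_add_sq_mul_mul_pow_four_add_sq_mul, hsum, hprod]
    ring
  have h : A₁ * B₂ + A₂ * B₁ =
      (4 * x ^ 4 + 17 * x ^ 6 + 20 * x ^ 8 + 3 * x ^ 10) /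
        (x ^ 6 * (x ^ 4 + 6 * x ^ 2 + 1)) := by
    rw [hA₁, hA₂, hB₁, hB₂, div_mul_div_add_div_mul_div_swap, hnum, hden]
  exact ⟨h, h ▸ by positivity⟩
end

section
/- For real Z₁ > 0 and Z₂ < 0 with Z₁Z₂ = -x² (x ≠ 0 real) and even n ≥ 10, the quantity F₄(n,x) := Z₁^{n-4} + Z₂^{n-4} - (Z₁Z₂)^{n/2-3}(Z₁² + Z₂²) factors as (Z₁^{n/2-1} - Z₂^{n/2-1})(Z₁^{n/2-3} - Z₂^{n/2-3}), and when n ≡ 2 (mod 4) this quantity is nonnegative. -/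
/-! For `k = n/2 - 3` the identity is a polynomial identity in `Z₁, Z₂`. When `n ≡ 2 (mod 4)`
both exponents `n/2 - 1` and `n/2 - 3` are even, so each factor `Z₁ ^ j - Z₂ ^ j` has the sign
of `|Z₁| - |Z₂|`, and the product of the two factors is nonnegative. -/

theorem sub_pow_mul_sub_pow_eq {R : Type*} [CommRing R] (a b : R) (k : ℕ) :
    (a ^ (k + 2) - b ^ (k + 2)) * (a ^ k - b ^ k) =
      a ^ (2 * k + 2) + b ^ (2 * k + 2) - (a * b) ^ k * (a ^ 2 + b ^ 2) := by
  ring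

theorem sub_pow_mul_sub_pow_nonneg_of_even {R : Type*} [CommRing R] [LinearOrder R]
    [IsStrictOrderedRing R] (a b : R) {j k : ℕ} (hj : Even j) (hk : Even k) :
    0 ≤ (a ^ j - b ^ j) * (a ^ k - b ^ k) := by
  rw [← hj.pow_abs a, ← hj.pow_abs b, ← hk.pow_abs a, ← hk.pow_abs b]
  rcases le_total |a| |b| with h | h
  · exact mul_nonneg_of_nonpos_of_nonpos
      (sub_nonpos.mpr (pow_le_pow_left₀ (abs_nonneg a) h j))
      (sub_nonpos.mpr (pow_le_pow_left₀ (abs_nonneg a) h k))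
  · exact mul_nonneg
      (sub_nonneg.mpr (pow_le_pow_left₀ (abs_nonneg b) h j))
      (sub_nonneg.mpr (pow_le_pow_left₀ (abs_nonneg b) h k))

theorem F4_factorization_and_sign_general
    (Z₁ Z₂ : ℝ)
    (n : ℕ) (hn : 10 ≤ n) (heven : Even n) :
    Z₁ ^ (n - 4) + Z₂ ^ (n - 4) - (Z₁ * Z₂) ^ (n / 2 - 3) * (Z₁ ^ 2 + Z₂ ^ 2) =
      (Z₁ ^ (n / 2 - 1) - Z₂ ^ (n / 2 - 1)) * (Z₁ ^ (n / 2 - 3) - Z₂ ^ (n / 2 - 3)) ∧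
    (n % 4 = 2 →
      0 ≤ Z₁ ^ (n - 4) + Z₂ ^ (n - 4) - (Z₁ * Z₂) ^ (n / 2 - 3) * (Z₁ ^ 2 + Z₂ ^ 2)) := by
  obtain ⟨m, rfl⟩ := heven
  set k := (m + m) / 2 - 3
  have hdeg : m + m - 4 = 2 * k + 2 := by omega
  have hhalf : (m + m) / 2 - 1 = k + 2 := by omega
  rw [hdeg, hhalf, ← sub_pow_mul_sub_pow_eq]
  refine ⟨rfl, fun hmod => ?_⟩
  have hk : Even k := ⟨k / 2, by omega⟩
  exact sub_pow_mul_sub_pow_nonneg_of_even Z₁ Z₂ (hk.add even_two) hk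

theorem F4_factorization_and_sign
    (x : ℝ) (hx : x ≠ 0) (Z₁ Z₂ : ℝ) (hZ₁ : 0 < Z₁) (hZ₂ : Z₂ < 0)
    (hprod : Z₁ * Z₂ = -x ^ 2)
    (n : ℕ) (hn : 10 ≤ n) (heven : Even n) :
    Z₁ ^ (n - 4) + Z₂ ^ (n - 4) - (Z₁ * Z₂) ^ (n / 2 - 3) * (Z₁ ^ 2 + Z₂ ^ 2) =
      (Z₁ ^ (n / 2 - 1) - Z₂ ^ (n / 2 - 1)) * (Z₁ ^ (n / 2 - 3) - Z₂ ^ (n / 2 - 3)) ∧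
    (n % 4 = 2 →
      0 ≤ Z₁ ^ (n - 4) + Z₂ ^ (n - 4) - (Z₁ * Z₂) ^ (n / 2 - 3) * (Z₁ ^ 2 + Z₂ ^ 2)) :=
  F4_factorization_and_sign_general Z₁ Z₂ n hn heven
end
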